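/- Let X be a real Banach space. If for every convex combination of slices C of the closed unit ball B_X and every ε > 0 there exists x ∈ C with ‖x‖ > 1 − ε, then every convex combination of slices of B_X has diameter two, i.e. X has the strong diameter two property. -/

import Mathlib

/-!
Reflect a convex combination of slices `C = ∑ λᵢ S(fᵢ, αᵢ)` to
`D = ∑ (λᵢ/2) S(fᵢ, αᵢ) + ∑ (λᵢ/2) S(-fᵢ, αᵢ)`. Since `S(-f, α) = -S(f, α)`, every `u ∈ D` is
`(x - y)/2` with `x, y ∈ C`, so a point of `D` of norm close to `1` yields two points of `C`
at distance close to `2`.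
-/

open Metric Set

/-- A slice of the closed unit ball of `X`: the set of points of the ball where a
norm-one functional `f` is larger than `1 - α`, for some `α > 0`. -/
def IsSlice {X : Type*} [NormedAddCommGroup X] [NormedSpace ℝ X] (S : Set X) : Prop :=
  ∃ (f : X →L[ℝ] ℝ) (α : ℝ), ‖f‖ = 1 ∧ 0 < α ∧
    S = {x : X | ‖x‖ ≤ 1 ∧ 1 - α < f x}

/-- A convex combination of slices of the closed unit ball of `X`. -/
def IsCCS {X : Type*} [NormedAddCommGroup X] [NormedSpace ℝ X] (C : Set X) : Prop :=
  ∃ (n : ℕ) (lam : Fin n → ℝ) (S : Fin n → Set X),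
    0 < n ∧ (∀ i, 0 ≤ lam i ∧ lam i ≤ 1) ∧ (∑ i, lam i) = 1 ∧
    (∀ i, IsSlice (S i)) ∧
    C = {z : X | ∃ x : Fin n → X, (∀ i, x i ∈ S i) ∧ z = ∑ i, lam i • x i}

open scoped Pointwise

theorem Metric.diam_eq_two_mul_of_subset_closedBall {E : Type*} [PseudoMetricSpace E]
    {C : Set E} {a : E} {r : ℝ} (hr : 0 ≤ r) (hC : C ⊆ closedBall a r)
    (hfar : ∀ ε > 0, ∃ x ∈ C, ∃ y ∈ C, 2 * r - ε < dist x y) : diam C = 2 * r := by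
  refine le_antisymm (diam_le_of_subset_closedBall hr hC) (le_of_forall_sub_le fun ε hε => ?_)
  obtain ⟨x, hx, y, hy, hxy⟩ := hfar ε hε
  exact hxy.le.trans (dist_le_diam_of_mem (isBounded_closedBall.subset hC) hx hy)

section

variable {X : Type*} [NormedAddCommGroup X] [NormedSpace ℝ X]

theorem IsSlice.subset_closedBall {S : Set X} (hS : IsSlice S) : S ⊆ closedBall 0 1 := by
  obtain ⟨f, α, -, -, rfl⟩ := hS
  intro x hx
  simpa using hx.1

theorem IsSlice.neg {S : Set X} (hS : IsSlice S) : IsSlice (-S) := by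
  obtain ⟨f, α, hf, hα, rfl⟩ := hS
  refine ⟨-f, α, by rw [norm_neg, hf], hα, ?_⟩
  ext x
  simp

theorem IsCCS.subset_closedBall {C : Set X} (hC : IsCCS C) : C ⊆ closedBall 0 1 := by
  obtain ⟨n, lam, S, -, hlam, hsum, hS, rfl⟩ := hC
  rintro _ ⟨x, hx, rfl⟩
  rw [← hsum, mem_closedBall_zero_iff]
  refine (norm_sum_le _ _).trans (Finset.sum_le_sum fun i _ => ?_)
  have hxi : ‖x i‖ ≤ 1 := mem_closedBall_zero_iff.mp ((hS i).subset_closedBall (hx i))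
  rw [norm_smul, Real.norm_of_nonneg (hlam i).1]
  exact mul_le_of_le_one_right (hlam i).1 hxi

theorem IsCCS.exists_isCCS_two_smul_subset_sub {C : Set X} (hC : IsCCS C) :
    ∃ D : Set X, IsCCS D ∧ (2 : ℝ) • D ⊆ C - C := by
  obtain ⟨n, lam, S, hn, hlam, hsum, hS, rfl⟩ := hC
  refine ⟨{z | ∃ x : Fin (n + n) → X, (∀ i, x i ∈ Fin.append S (fun i => -S i) i) ∧
      z = ∑ i, Fin.append (fun i => lam i / 2) (fun i => lam i / 2) i • x i},
    ⟨n + n, _, _, by omega, ?weights, ?sum, ?slices, rfl⟩, ?_⟩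
  case weights =>
    refine Fin.addCases (fun i => ?_) (fun i => ?_) <;>
      simp only [Fin.append_left, Fin.append_right] <;>
      constructor <;> linarith [hlam i]
  case sum =>
    simp only [Fin.sum_univ_add, Fin.append_left, Fin.append_right,
      ← Finset.sum_div, hsum]
    norm_num
  case slices =>
    refine Fin.addCases (fun i => ?_) (fun i => ?_)
    · simpa only [Fin.append_left] using hS i
    · simpa only [Fin.append_right] using (hS i).neg
  rintro _ ⟨_, ⟨w, hw, rfl⟩, rfl⟩
  refine ⟨∑ i, lam i • w (Fin.castAdd n i), ⟨_, fun i => ?_, rfl⟩,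
    ∑ i, lam i • -w (Fin.natAdd n i), ⟨_, fun i => ?_, rfl⟩, ?_⟩
  · simpa only [Fin.append_left] using hw (Fin.castAdd n i)
  · simpa only [Fin.append_right, Set.mem_neg] using hw (Fin.natAdd n i)
  · simp only [Fin.sum_univ_add, Fin.append_left, Fin.append_right, smul_add,
      Finset.smul_sum, smul_smul, smul_neg, Finset.sum_neg_distrib, sub_neg_eq_add]
    congr 1 <;> exact Finset.sum_congr rfl fun i _ => by rw [mul_div_cancel₀ _ two_ne_zero]

end

theorem sd2p_of_norm_almost_one_general
    {X : Type*} [NormedAddCommGroup X] [NormedSpace ℝ X]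
    (h : ∀ C : Set X, IsCCS C → ∀ ε : ℝ, 0 < ε → ∃ x ∈ C, 1 - ε < ‖x‖) :
    ∀ C : Set X, IsCCS C → Metric.diam C = 2 := by
  intro C hC
  rw [← mul_one 2]
  refine diam_eq_two_mul_of_subset_closedBall zero_le_one hC.subset_closedBall fun ε hε => ?_
  obtain ⟨D, hD, hDC⟩ := hC.exists_isCCS_two_smul_subset_sub
  obtain ⟨u, hu, hnorm⟩ := h D hD (ε / 2) (half_pos hε)
  obtain ⟨x, hx, y, hy, hxy⟩ := hDC (smul_mem_smul_set hu)
  refine ⟨x, hx, y, hy, ?_⟩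
  rw [dist_eq_norm, show x - y = (2 : ℝ) • u from hxy, norm_smul, Real.norm_two]
  linarith

theorem sd2p_of_norm_almost_one
    {X : Type*} [NormedAddCommGroup X] [NormedSpace ℝ X] [CompleteSpace X]
    (h : ∀ C : Set X, IsCCS C → ∀ ε : ℝ, 0 < ε → ∃ x ∈ C, 1 - ε < ‖x‖) :
    ∀ C : Set X, IsCCS C → Metric.diam C = 2 :=
  sd2p_of_norm_almost_one_general h
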